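/- For every integer k, every integer r ≥ 0, and every integer n ≥ 0, the poly-Cauchy polynomial of the first kind expands in higher-order Bernoulli polynomials as C_n^(k)(x) = Σ_{m=0}^{n} { (-1)^m Σ_{l=0}^{n-m} Σ_{a=0}^{n-m-l} C(n, l+m) C(n-m-l, a) S₁(l+m, m) β_a^{(r)}(-r) C_{n-m-l-a}^{(k)} } B_m^{(r)}(x), where β_n^{(r)}(x) are Carlitz's polynomials and B_m^{(r)}(x) the Bernoulli polynomials of order r. -/

import Mathlib

open PowerSeries Finset

/-- Composition `F(G(t))` of formal power series (intended for `G` with zero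
constant term, in which case `coeff n (G ^ m) = 0` for `m > n` and the finite
sum below computes the usual composition). -/
noncomputable def psComp (F G : PowerSeries ℝ) : PowerSeries ℝ :=
  PowerSeries.mk fun n => ∑ m ∈ Finset.range (n + 1),
    (PowerSeries.coeff m F) * (PowerSeries.coeff n (G ^ m))

/-- The formal power series of `log (1 + t)`. -/
noncomputable def logSeries : PowerSeries ℝ :=
  PowerSeries.mk fun n => if n = 0 then 0 else (-1) ^ (n + 1) / n

/-- The polylogarithm factorial function `Lif_k(t) = ∑_{m ≥ 0} t^m / (m! (m+1)^k)`. -/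
noncomputable def Lif (k : ℤ) : PowerSeries ℝ :=
  PowerSeries.mk fun m => 1 / ((m.factorial : ℝ) * ((m : ℝ) + 1) ^ k)

/-- The poly-Cauchy polynomial of the first kind `C_n^{(k)}(x)`, defined by
`Lif_k(log(1+t)) / (1+t)^x = ∑_{n ≥ 0} C_n^{(k)}(x) t^n / n!`, where
`(1+t)^{-x} = exp (-x · log (1+t))`. -/
noncomputable def polyCauchy (k : ℤ) (n : ℕ) (x : ℝ) : ℝ :=
  (n.factorial : ℝ) * PowerSeries.coeff n
    (psComp (Lif k) logSeries *
      psComp (PowerSeries.rescale (-x) (PowerSeries.exp ℝ)) logSeries)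

/-- The (signed) Stirling numbers of the first kind `S₁(l, m)`, defined by
`(log (1+t))^m = m! ∑_{l ≥ m} S₁(l,m) t^l / l!`. -/
noncomputable def S1 (l m : ℕ) : ℝ :=
  (l.factorial : ℝ) / (m.factorial : ℝ) * PowerSeries.coeff l (logSeries ^ m)

/-- The ordinary Bernoulli numbers, via `t/(e^t - 1) = ∑ B_n t^n/n!`;
here `(mk fun m => 1/(m+1)!)` is the series `(e^t - 1)/t`. -/
noncomputable def Bern (n : ℕ) : ℝ :=
  (n.factorial : ℝ) * PowerSeries.coeff n
    (PowerSeries.mk fun m => (1 : ℝ) / (m + 1).factorial)⁻¹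

/-- The Bernoulli polynomial of order `r`, via `(t/(e^t-1))^r e^{xt} = ∑ B_n^{(r)}(x) t^n/n!`. -/
noncomputable def bernPoly (r : ℕ) (n : ℕ) (x : ℝ) : ℝ :=
  (n.factorial : ℝ) * PowerSeries.coeff n
    (((PowerSeries.mk fun m => (1 : ℝ) / (m + 1).factorial)⁻¹) ^ r *
      PowerSeries.rescale x (PowerSeries.exp ℝ))

/-- The series `log(1+t)/t`, so that `t / log(1+t) = Dlog⁻¹`. -/
noncomputable def Dlog : PowerSeries ℝ :=
  PowerSeries.mk fun n => (-1) ^ n / ((n : ℝ) + 1)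

/-- The Cauchy numbers of the first kind, via `t/log(1+t) = ∑ C_n t^n/n!`. -/
noncomputable def cauchyNum (n : ℕ) : ℝ :=
  (n.factorial : ℝ) * PowerSeries.coeff n Dlog⁻¹

/-- The numbers `T_n^{(r,k)}`, via
`(t/log(1+t))^r · Lif_k(log(1+t)) = ∑ T_n^{(r,k)} t^n/n!`. -/
noncomputable def T (r : ℕ) (k : ℤ) (n : ℕ) : ℝ :=
  (n.factorial : ℝ) * PowerSeries.coeff n (Dlog⁻¹ ^ r * psComp (Lif k) logSeries)

/-- The rising factorial `x^{(m)} = x (x+1) ⋯ (x+m-1)`. -/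
noncomputable def risingFactorial (x : ℝ) (m : ℕ) : ℝ :=
  ∏ i ∈ Finset.range m, (x + i)

/-- Carlitz's polynomials `β_n^{(r)}(x)`, via `(t/log(1+t))^r (1+t)^x = ∑ β_n^{(r)}(x) t^n/n!`,
where `(1+t)^x = exp (x log (1+t))`. -/
noncomputable def carlitz (r : ℕ) (n : ℕ) (x : ℝ) : ℝ :=
  (n.factorial : ℝ) * PowerSeries.coeff n
    (Dlog⁻¹ ^ r * psComp (PowerSeries.rescale x (PowerSeries.exp ℝ)) logSeries)

open scoped Nat

/-!
With `s = -log (1 + t)` one has `e^s = (1 + t)⁻¹` and `s / (e^s - 1) = (1 + t) log (1 + t) / t`, so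
`(1 + t)^{-x} = [(s / (e^s - 1))^r e^{xs}] · (t / log (1 + t))^r (1 + t)^{-r}`.
The bracket is `∑ B_m^{(r)}(x) (-log (1 + t))^m / m!`; multiplying by `Lif_k(log (1 + t))` and
reading off coefficients with the Stirling numbers `S₁` gives the expansion. The one analytic input,
`exp (log (1 + t)) = 1 + t`, holds because `exp ∘ log` solves `(1 + t) E' = E` with `E(0) = 1`.
-/

namespace PowerSeries

theorem coeff_pow_eq_zero_of_lt {R : Type*} [CommSemiring R] {G : R⟦X⟧}
    (hG : constantCoeff G = 0) {m n : ℕ} (h : n < m) : coeff n (G ^ m) = 0 :=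
  X_pow_dvd_iff.mp (pow_dvd_pow_of_dvd (X_dvd_iff.mpr hG) m) n h

theorem factorial_mul_coeff_mul {R : Type*} [CommSemiring R] (A B : R⟦X⟧) (n : ℕ) :
    (n ! : R) * coeff n (A * B) = ∑ j ∈ range (n + 1),
      (n.choose j : R) * ((j ! : R) * coeff j A) * (((n - j) ! : R) * coeff (n - j) B) := by
  rw [coeff_mul, Nat.sum_antidiagonal_eq_sum_range_succ_mk, mul_sum]
  refine sum_congr rfl fun j hj => ?_
  rw [← Nat.choose_mul_factorial_mul_factorial (Nat.le_of_lt_succ (mem_range.mp hj))]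
  push_cast
  ring

theorem subst_one {K : Type*} [CommRing K] {g : K⟦X⟧} (hg : HasSubst g) :
    (1 : K⟦X⟧).subst g = 1 := by
  rw [← coe_substAlgHom hg, map_one]

theorem subst_rescale {K : Type*} [CommRing K] {g : K⟦X⟧} (hg : HasSubst g) (r : K)
    (f : K⟦X⟧) : (rescale r f).subst g = f.subst (r • g) := by
  rw [rescale_eq_subst, subst_comp_subst_apply (HasSubst.smul_X' r) hg, subst_smul hg,
    subst_X hg]

theorem derivative_log_eq_inv {K : Type*} [Field K] [CharZero K] :
    d⁄dX K (log K) = (1 + X)⁻¹ := by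
  refine (PowerSeries.eq_inv_iff_mul_eq_one (by simp)).mpr ?_
  ext n
  rw [deriv_log, mul_add, mul_one, map_add]
  cases n with
  | zero => simp
  | succ n => simp [coeff_succ_mul_X, pow_succ]

theorem exp_subst_log {K : Type*} [Field K] [CharZero K] :
    (exp K).subst (log K) = 1 + X := by
  set E := (exp K).subst (log K)
  have hE : d⁄dX K E = E * (1 + X)⁻¹ := by
    rw [derivative_subst HasSubst.log, derivative_exp, derivative_log_eq_inv]
  have hconst : constantCoeff E = 1 := by
    rw [← coeff_zero_eq_constantCoeff_apply, coeff_subst' HasSubst.log, finsum_eq_single _ 0]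
    · simp
    · intro d hd
      rw [coeff_pow_eq_zero_of_lt constantCoeff_log (Nat.pos_of_ne_zero hd), smul_zero]
  have h1 : (1 + X : K⟦X⟧) * (1 + X)⁻¹ = 1 := PowerSeries.mul_inv_cancel _ (by simp)
  have hquot : E * (1 + X)⁻¹ = 1 := by
    refine derivative.ext ?_ ?_
    · simp only [Derivation.leibniz, derivative_inv', map_add, Derivation.map_one_eq_zero,
        derivative_X, zero_add, mul_one, smul_eq_mul, mul_neg, hE]
      ring
    · simp [hconst]
  calc E = E * (1 + X)⁻¹ * (1 + X) := by rw [mul_assoc, mul_comm _ (1 + X), h1, mul_one]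
    _ = 1 + X := by rw [hquot, one_mul]
end PowerSeries

open PowerSeries

theorem psComp_eq_subst {G : ℝ⟦X⟧} (hG : constantCoeff G = 0) (F : ℝ⟦X⟧) :
    psComp F G = F.subst G := by
  ext n
  rw [coeff_subst' (HasSubst.of_constantCoeff_zero' hG),
    finsum_eq_sum_of_support_subset (s := range (n + 1))]
  · simp [psComp, smul_eq_mul]
  · intro m hm
    rw [coe_range, Set.mem_Iio, Nat.lt_succ_iff]
    by_contra h
    exact hm (by simp only [coeff_pow_eq_zero_of_lt hG (not_le.mp h), smul_zero])

theorem coeff_psComp_mul {G : ℝ⟦X⟧} (hG : constantCoeff G = 0) (F R : ℝ⟦X⟧) (n : ℕ) :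
    coeff n (psComp F G * R) = ∑ m ∈ range (n + 1), coeff m F * coeff n (G ^ m * R) := by
  have hcoeff : ∀ i ≤ n,
      coeff i (psComp F G) = ∑ m ∈ range (n + 1), coeff m F * coeff i (G ^ m) := by
    intro i hi
    rw [psComp, coeff_mk]
    refine sum_subset (range_subset_range.mpr (by omega)) fun m _ hm => ?_
    rw [coeff_pow_eq_zero_of_lt hG (by simpa using hm), mul_zero]
  simp_rw [coeff_mul, mul_sum]
  rw [sum_comm]
  refine sum_congr rfl fun p hp => ?_
  rw [hcoeff p.1 (Finset.HasAntidiagonal.antidiagonal.fst_le hp), sum_mul]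
  simp_rw [mul_assoc]

theorem logSeries_eq_log : logSeries = log ℝ := by
  ext n
  simp [logSeries]

theorem constantCoeff_logSeries : constantCoeff logSeries = 0 := by
  rw [logSeries_eq_log, constantCoeff_log]

noncomputable def expSubOneDivX : ℝ⟦X⟧ :=
  mk fun m => (1 : ℝ) / (m + 1).factorial

theorem X_mul_expSubOneDivX : X * expSubOneDivX = exp ℝ - 1 := by
  ext n
  cases n with
  | zero => simp [coeff_zero_eq_constantCoeff, constantCoeff_exp]
  | succ n => simp [coeff_succ_X_mul, expSubOneDivX, coeff_exp]

theorem X_mul_Dlog : X * Dlog = log ℝ := by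
  ext n
  cases n with
  | zero => simp
  | succ n =>
    rw [coeff_succ_X_mul, Dlog, coeff_mk, coeff_log, if_neg n.succ_ne_zero]
    push_cast
    ring

theorem rescale_neg_nat_exp (r : ℕ) :
    rescale (-(r : ℝ)) (exp ℝ) = rescale (-1) (exp ℝ) ^ r := by
  rw [← map_pow, exp_pow_eq_rescale_exp, rescale_rescale, mul_neg_one]

theorem rescale_neg_one_exp_subst_log_mul :
    (rescale (-1 : ℝ) (exp ℝ)).subst (log ℝ) * (1 + X) = 1 := by
  have h : rescale (-1 : ℝ) (exp ℝ) * exp ℝ = 1 := by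
    simpa using exp_mul_exp_eq_exp_add (-1 : ℝ) 1
  rw [← exp_subst_log, ← subst_mul HasSubst.log, h, subst_one HasSubst.log]

theorem expSubOneDivX_inv_subst_neg_log :
    expSubOneDivX⁻¹.subst (-log ℝ) = Dlog * (1 + X) := by
  have hnL : HasSubst (-log ℝ) := HasSubst.of_constantCoeff_zero' (by simp)
  have hexp : (exp ℝ).subst (-log ℝ) = (rescale (-1 : ℝ) (exp ℝ)).subst (log ℝ) := by
    rw [subst_rescale HasSubst.log, neg_one_smul]
  have hE : -(X * Dlog) * expSubOneDivX.subst (-log ℝ) * (1 + X) = -X := by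
    have := congrArg (fun f => f.subst (-log ℝ) * (1 + X)) X_mul_expSubOneDivX
    simp only [subst_mul hnL, subst_X hnL, subst_sub hnL, subst_one hnL, hexp, sub_mul,
      rescale_neg_one_exp_subst_log_mul, one_mul] at this
    rw [X_mul_Dlog, this]
    ring
  have hE' : expSubOneDivX.subst (-log ℝ) * (Dlog * (1 + X)) = 1 := by
    refine mul_left_cancel₀ (neg_ne_zero.mpr X_ne_zero) ?_
    linear_combination hE
  have hinv : expSubOneDivX⁻¹.subst (-log ℝ) * expSubOneDivX.subst (-log ℝ) = 1 := by
    rw [← subst_mul hnL, PowerSeries.inv_mul_cancel _ (by simp [expSubOneDivX]), subst_one hnL]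
  linear_combination (Dlog * (1 + X)) * hinv - expSubOneDivX⁻¹.subst (-log ℝ) * hE'

theorem psComp_rescale_exp_logSeries_eq (r : ℕ) (x : ℝ) :
    psComp (rescale (-x) (exp ℝ)) logSeries
      = psComp (expSubOneDivX⁻¹ ^ r * rescale x (exp ℝ)) (-logSeries)
        * (Dlog⁻¹ ^ r * psComp (rescale (-(r : ℝ)) (exp ℝ)) logSeries) := by
  have hnL : HasSubst (-log ℝ) := HasSubst.of_constantCoeff_zero' (by simp)
  have hD : Dlog * Dlog⁻¹ = 1 := PowerSeries.mul_inv_cancel _ (by simp [Dlog])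
  have hflip : (rescale x (exp ℝ)).subst (-log ℝ) = (rescale (-x) (exp ℝ)).subst (log ℝ) := by
    rw [subst_rescale hnL, subst_rescale HasSubst.log, smul_neg, neg_smul]
  simp only [logSeries_eq_log, psComp_eq_subst constantCoeff_log,
    psComp_eq_subst (G := -log ℝ) (by simp), subst_mul hnL, subst_pow hnL,
    expSubOneDivX_inv_subst_neg_log, hflip, rescale_neg_nat_exp, subst_pow HasSubst.log]
  calc _ = (Dlog * Dlog⁻¹) ^ r * ((rescale (-1 : ℝ) (exp ℝ)).subst (log ℝ) * (1 + X)) ^ r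
        * (rescale (-x) (exp ℝ)).subst (log ℝ) := by
        rw [hD, rescale_neg_one_exp_subst_log_mul, one_pow, one_mul, one_mul]
    _ = _ := by simp only [mul_pow]; ring

theorem polyCauchy_zero (k : ℤ) (n : ℕ) :
    polyCauchy k n 0 = n ! * coeff n (psComp (Lif k) logSeries) := by
  rw [polyCauchy, neg_zero, logSeries_eq_log, psComp_eq_subst constantCoeff_log (rescale _ _),
    rescale_zero]
  simp [constantCoeff_exp, subst_one HasSubst.log]

theorem factorial_mul_coeff_logSeries_pow_mul {m n : ℕ} (hmn : m ≤ n) (R : ℝ⟦X⟧) :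
    (n ! : ℝ) * coeff n (logSeries ^ m * R) = m ! * ∑ l ∈ range (n - m + 1),
      (n.choose (l + m) : ℝ) * S1 (l + m) m * ((n - m - l) ! * coeff (n - m - l) R) := by
  rw [factorial_mul_coeff_mul, ← sum_range_add_sum_Ico _ (by omega : m ≤ n + 1),
    sum_eq_zero fun j hj => by
      rw [coeff_pow_eq_zero_of_lt constantCoeff_logSeries (mem_range.mp hj), mul_zero,
        mul_zero, zero_mul],
    zero_add, sum_Ico_eq_sum_range, mul_sum, show n + 1 - m = n - m + 1 by omega]
  refine sum_congr rfl fun l _ => ?_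
  have hm : (m ! : ℝ) ≠ 0 := by positivity
  rw [S1, add_comm m l, Nat.sub_sub, add_comm m l]
  field_simp

/-- Theorem 8 of the paper. -/
theorem polyCauchy_eq_bernoulli_poly_expansion (k : ℤ) (r : ℕ) (n : ℕ) (x : ℝ) :
    polyCauchy k n x =
      ∑ m ∈ Finset.range (n + 1),
        ((-1 : ℝ) ^ m *
          ∑ l ∈ Finset.range (n - m + 1), ∑ a ∈ Finset.range (n - m - l + 1),
            (n.choose (l + m) : ℝ) * ((n - m - l).choose a : ℝ) *
              S1 (l + m) m * carlitz r a (-(r : ℝ)) * polyCauchy k (n - m - l - a) 0) *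
        bernPoly r m x := by
  have hcarlitz : ∀ j, (j ! : ℝ) * coeff j
      (Dlog⁻¹ ^ r * psComp (rescale (-(r : ℝ)) (exp ℝ)) logSeries * psComp (Lif k) logSeries)
      = ∑ a ∈ range (j + 1), (j.choose a : ℝ) * carlitz r a (-(r : ℝ)) * polyCauchy k (j - a) 0 := by
    intro j
    rw [factorial_mul_coeff_mul]
    simp only [polyCauchy_zero]
    rfl
  rw [polyCauchy, psComp_rescale_exp_logSeries_eq r x, mul_comm (psComp (Lif k) _), mul_assoc,
    coeff_psComp_mul (by simp [constantCoeff_logSeries]), mul_sum]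
  refine sum_congr rfl fun m hm => ?_
  rw [← neg_one_smul ℝ logSeries, smul_pow, smul_mul_assoc, map_smul, smul_eq_mul,
    mul_left_comm, mul_left_comm (n ! : ℝ),
    factorial_mul_coeff_logSeries_pow_mul (Nat.lt_succ_iff.mp (mem_range.mp hm))]
  show _ = _ * ((m ! : ℝ) * coeff m (expSubOneDivX⁻¹ ^ r * rescale x (exp ℝ)))
  simp only [hcarlitz, mul_sum, sum_mul]
  exact sum_congr rfl fun l _ => sum_congr rfl fun a _ => by ring
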